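/- Let 1 < q < ∞ and α > 0. There exists a constant C = C(n, q, α) > 0 such that for every z ∈ ℝⁿ with z ≠ 0, ( ∫₀^∞ |t^α ∂_t^α p_t(z)|^q dt/t )^{1/q} ≤ C · |z|^{−n}. -/

import Mathlib

open MeasureTheory Set
open scoped ENNReal

/-- The Poisson kernel of the upper half-space `ℝ^{n+1}_+`:
`p_t(x) = Γ((n+1)/2) π^{−(n+1)/2} t (t² + |x|²)^{−(n+1)/2}`. -/
noncomputable def poissonKernelHalfSpace (n : ℕ) (t : ℝ) (x : EuclideanSpace ℝ (Fin n)) : ℝ :=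
  Real.Gamma (((n : ℝ) + 1) / 2) / Real.pi ^ (((n : ℝ) + 1) / 2) *
    (t * (t ^ 2 + ‖x‖ ^ 2) ^ (-(((n : ℝ) + 1) / 2)))

/-- The smallest integer strictly greater than `α` (for `α ≥ 0`). -/
noncomputable def mOf (α : ℝ) : ℕ := ⌊α⌋₊ + 1

/-- The fractional derivative in `t` of the Poisson kernel, of order `α > 0`, with `m` the
smallest integer strictly exceeding `α`:
`∂_t^α p_t(x) = (e^{−iπ(m−α)}/Γ(m−α)) ∫₀^∞ ∂_t^m p_{t+s}(x) s^{m−α−1} ds`. -/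
noncomputable def fracKernel (n : ℕ) (α : ℝ) (t : ℝ) (x : EuclideanSpace ℝ (Fin n)) : ℂ :=
  Complex.exp ((↑(-(Real.pi * ((mOf α : ℝ) - α))) : ℂ) * Complex.I) /
      (Real.Gamma ((mOf α : ℝ) - α) : ℂ) *
    ((∫ s in Ioi (0 : ℝ),
        iteratedDeriv (mOf α) (fun r => poissonKernelHalfSpace n r x) (t + s) *
          s ^ ((mOf α : ℝ) - α - 1) : ℝ) : ℂ)

/-- `∂_t^α P_t f(x) = ∫_{ℝⁿ} ∂_t^α p_t(x−y) f(y) dy` for a `B`-valued `f`. -/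
noncomputable def fracPoisson (n : ℕ) {B : Type*} [NormedAddCommGroup B] [NormedSpace ℂ B]
    (α t : ℝ) (f : EuclideanSpace ℝ (Fin n) → B) (x : EuclideanSpace ℝ (Fin n)) : B :=
  ∫ y, fracKernel n α t (x - y) • f y

/-- The fractional Littlewood–Paley `g`-function
`g_α^q(f)(x) = (∫₀^∞ ‖t^α ∂_t^α P_t f(x)‖_B^q dt/t)^{1/q}`, with values in `[0,∞]`. -/
noncomputable def gFun (n : ℕ) {B : Type*} [NormedAddCommGroup B] [NormedSpace ℂ B]
    (q α : ℝ) (f : EuclideanSpace ℝ (Fin n) → B) (x : EuclideanSpace ℝ (Fin n)) : ℝ≥0∞ :=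
  (∫⁻ t in Ioi (0 : ℝ),
      ENNReal.ofReal (‖t ^ α • fracPoisson n α t f x‖ ^ q / t)) ^ (1 / q)

/-- The fractional area function
`S_α^q(f)(x) = (∬_{|x−y|<t} ‖t^α ∂_t^α P_t f(y)‖_B^q dy dt/t^{n+1})^{1/q}`,
with values in `[0,∞]`. -/
noncomputable def areaFun (n : ℕ) {B : Type*} [NormedAddCommGroup B] [NormedSpace ℂ B]
    (q α : ℝ) (f : EuclideanSpace ℝ (Fin n) → B) (x : EuclideanSpace ℝ (Fin n)) : ℝ≥0∞ :=
  (∫⁻ t in Ioi (0 : ℝ), ∫⁻ y in {y | ‖x - y‖ < t},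
      ENNReal.ofReal (‖t ^ α • fracPoisson n α t f y‖ ^ q / t ^ (n + 1))) ^ (1 / q)

/-- The fractional `g*_λ`-function
`g_{λ,α}^{q,*}(f)(x) = (∬_{ℝⁿ×(0,∞)} (t/(t+|x−y|))^{λn} ‖t^α ∂_t^α P_t f(y)‖_B^q
dy dt/t^{n+1})^{1/q}`, with values in `[0,∞]`. -/
noncomputable def gStarFun (n : ℕ) {B : Type*} [NormedAddCommGroup B] [NormedSpace ℂ B]
    (q α lam : ℝ) (f : EuclideanSpace ℝ (Fin n) → B) (x : EuclideanSpace ℝ (Fin n)) : ℝ≥0∞ :=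
  (∫⁻ t in Ioi (0 : ℝ), ∫⁻ y,
      ENNReal.ofReal ((t / (t + ‖x - y‖)) ^ (lam * n) *
        ‖t ^ α • fracPoisson n α t f y‖ ^ q / t ^ (n + 1))) ^ (1 / q)

/-!
Differentiating `r ↦ r (r² + a²)^{-(n+1)/2}` `m` times gives a linear combination of
`r^j (r² + a²)^{-((n+1)/2 + k)}` with `j - 2k = 1 - m`, each bounded by a constant times
`(r + a)^{-(n+m)}`. Inserting this into the defining integral, with `β = m - α ∈ (0, 1]`, gives
`|∂_t^α p_t(z)| ≲ ∫₀^∞ (t + |z| + s)^{-(n+m)} s^{β-1} ds ≲ (t + |z|)^{-(n+α)}`. Splitting the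
`dt/t` integral at `t = |z|` bounds it by a constant times `|z|^{-nq}`.
-/

namespace PoissonKernel

noncomputable def monomial (κ a : ℝ) (j k : ℕ) (r : ℝ) : ℝ :=
  r ^ j * (r ^ 2 + a ^ 2) ^ (-(κ + k))

-- The condition `j + d = 2k + 1` makes every generator homogeneous of degree `1 - 2κ - d` in
-- `(a, r)`. The span is taken in functions of `(a, r)` so that all constants below are uniform
-- in `a`.
noncomputable def monomialSpan (κ : ℝ) (d : ℕ) : Submodule ℝ (ℝ → ℝ → ℝ) :=
  Submodule.span ℝ {F | ∃ j k : ℕ, j + d = 2 * k + 1 ∧ F = fun a => monomial κ a j k}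

theorem hasDerivAt_monomial (κ : ℝ) {a : ℝ} (ha : a ≠ 0) (j k : ℕ) (r : ℝ) :
    HasDerivAt (monomial κ a j k)
      (j * monomial κ a (j - 1) k r - 2 * (κ + k) * monomial κ a (j + 1) (k + 1) r) r := by
  have hpos : 0 < r ^ 2 + a ^ 2 := by positivity
  have hbase : HasDerivAt (fun r : ℝ => r ^ 2 + a ^ 2) (2 * r) r := by
    simpa using (hasDerivAt_pow 2 r).add_const (a ^ 2)
  have h : HasDerivAt (monomial κ a j k) (j * r ^ (j - 1) * (r ^ 2 + a ^ 2) ^ (-(κ + k)) +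
      r ^ j * (2 * r * -(κ + k) * (r ^ 2 + a ^ 2) ^ (-(κ + k) - 1))) r :=
    (hasDerivAt_pow j r).mul (hbase.rpow_const (Or.inl hpos.ne'))
  convert h using 1
  rw [monomial, monomial, show -(κ + ((k + 1 : ℕ) : ℝ)) = -(κ + k) - 1 by push_cast; ring]
  ring

theorem exists_hasDerivAt_of_mem_monomialSpan {κ : ℝ} {d : ℕ} {F : ℝ → ℝ → ℝ}
    (hF : F ∈ monomialSpan κ d) :
    ∃ G ∈ monomialSpan κ (d + 1), ∀ a ≠ 0, ∀ r, HasDerivAt (F a) (G a r) r := by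
  induction hF using Submodule.span_induction with
  | mem F hF =>
    obtain ⟨j, k, hjk, rfl⟩ := hF
    refine ⟨fun a r => j * monomial κ a (j - 1) k r - 2 * (κ + k) * monomial κ a (j + 1) (k + 1) r,
      ?_, fun a ha r => hasDerivAt_monomial κ ha j k r⟩
    have hlower : (fun a r => (j : ℝ) * monomial κ a (j - 1) k r) ∈ monomialSpan κ (d + 1) := by
      rcases j with _ | j
      · simp only [Nat.cast_zero, zero_mul]
        exact Submodule.zero_mem _
      · have hmem : (fun a => monomial κ a j k) ∈ monomialSpan κ (d + 1) :=
          Submodule.subset_span ⟨j, k, by omega, rfl⟩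
        convert Submodule.smul_mem _ ((j : ℝ) + 1) hmem using 1
        ext a r
        simp
    have hupper : (fun a r => 2 * (κ + k) * monomial κ a (j + 1) (k + 1) r) ∈
        monomialSpan κ (d + 1) := by
      have hmem : (fun a => monomial κ a (j + 1) (k + 1)) ∈ monomialSpan κ (d + 1) :=
        Submodule.subset_span ⟨j + 1, k + 1, by omega, rfl⟩
      exact Submodule.smul_mem _ (2 * (κ + k)) hmem
    exact Submodule.sub_mem _ hlower hupper
  | zero => exact ⟨0, Submodule.zero_mem _, fun a _ r => hasDerivAt_const r 0⟩
  | add F₁ F₂ _ _ ih₁ ih₂ =>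
    obtain ⟨G₁, hG₁, h₁⟩ := ih₁
    obtain ⟨G₂, hG₂, h₂⟩ := ih₂
    exact ⟨G₁ + G₂, Submodule.add_mem _ hG₁ hG₂, fun a ha r => (h₁ a ha r).add (h₂ a ha r)⟩
  | smul c F _ ih =>
    obtain ⟨G, hG, h⟩ := ih
    exact ⟨c • G, Submodule.smul_mem _ c hG, fun a ha r => (h a ha r).const_mul c⟩

theorem exists_iteratedDeriv_eq_of_mem_monomialSpan {κ : ℝ} {d : ℕ} {F : ℝ → ℝ → ℝ}
    (hF : F ∈ monomialSpan κ d) (m : ℕ) :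
    ∃ G ∈ monomialSpan κ (d + m), ∀ a ≠ 0, iteratedDeriv m (F a) = G a := by
  induction m with
  | zero => exact ⟨F, hF, fun a _ => iteratedDeriv_zero⟩
  | succ m ih =>
    obtain ⟨G, hG, hFG⟩ := ih
    obtain ⟨H, hH, hGH⟩ := exists_hasDerivAt_of_mem_monomialSpan hG
    refine ⟨H, hH, fun a ha => ?_⟩
    rw [iteratedDeriv_succ, hFG a ha]
    exact funext fun r => (hGH a ha r).deriv

theorem abs_monomial_le {κ a r : ℝ} (hκ : 0 ≤ κ) (ha : 0 < a) (hr : 0 ≤ r) {j k d : ℕ}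
    (hjk : j + d = 2 * k + 1) :
    |monomial κ a j k r| ≤ 2 ^ (κ + k) * (r + a) ^ (1 - 2 * κ - d) := by
  have hra : 0 < r + a := by linarith
  have hsq : (r + a) ^ 2 / 2 ≤ r ^ 2 + a ^ 2 := by nlinarith [sq_nonneg (r - a)]
  have hexp : (j : ℝ) + -2 * (κ + k) = 1 - 2 * κ - d := by
    have := congrArg (Nat.cast (R := ℝ)) hjk
    push_cast at this
    linarith
  calc |monomial κ a j k r| = r ^ j * (r ^ 2 + a ^ 2) ^ (-(κ + k)) :=
        abs_of_nonneg (by unfold monomial; positivity)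
    _ ≤ (r + a) ^ j * ((r + a) ^ 2 / 2) ^ (-(κ + k)) := by
        gcongr ?_ * ?_
        · exact pow_le_pow_left₀ hr (by linarith) j
        · exact Real.rpow_le_rpow_of_nonpos (by positivity) hsq (by linarith)
    _ = 2 ^ (κ + k) * (r + a) ^ (1 - 2 * κ - d) := by
        rw [Real.div_rpow (by positivity) zero_le_two, ← Real.rpow_natCast (r + a) 2,
          ← Real.rpow_mul hra.le, Real.rpow_neg zero_le_two, ← hexp,
          Real.rpow_add hra, Real.rpow_natCast]
        field_simp
        ring_nf

theorem exists_abs_le_of_mem_monomialSpan {κ : ℝ} (hκ : 0 ≤ κ) {d : ℕ} {F : ℝ → ℝ → ℝ}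
    (hF : F ∈ monomialSpan κ d) :
    ∃ D, 0 ≤ D ∧ ∀ a > 0, ∀ r ≥ 0, |F a r| ≤ D * (r + a) ^ (1 - 2 * κ - d) := by
  induction hF using Submodule.span_induction with
  | mem F hF =>
    obtain ⟨j, k, hjk, rfl⟩ := hF
    exact ⟨2 ^ (κ + k), by positivity, fun a ha r hr => abs_monomial_le hκ ha hr hjk⟩
  | zero => exact ⟨0, le_rfl, fun a _ r _ => by simp⟩
  | add F₁ F₂ _ _ ih₁ ih₂ =>
    obtain ⟨D₁, hD₁, h₁⟩ := ih₁
    obtain ⟨D₂, hD₂, h₂⟩ := ih₂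
    refine ⟨D₁ + D₂, by positivity, fun a ha r hr => ?_⟩
    calc |(F₁ + F₂) a r| ≤ |F₁ a r| + |F₂ a r| := abs_add_le _ _
      _ ≤ (D₁ + D₂) * (r + a) ^ (1 - 2 * κ - d) := by
        rw [add_mul]; exact add_le_add (h₁ a ha r hr) (h₂ a ha r hr)
  | smul c F _ ih =>
    obtain ⟨D, hD, h⟩ := ih
    refine ⟨|c| * D, by positivity, fun a ha r hr => ?_⟩
    rw [Pi.smul_apply, Pi.smul_apply, smul_eq_mul, abs_mul, mul_assoc]
    exact mul_le_mul_of_nonneg_left (h a ha r hr) (abs_nonneg c)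

theorem lintegral_Ioc_rpow_sub_one {c p : ℝ} (hc : 0 ≤ c) (hp : 0 < p) :
    ∫⁻ s in Ioc 0 c, ENNReal.ofReal (s ^ (p - 1)) = ENNReal.ofReal (c ^ p / p) := by
  rw [← ofReal_integral_eq_lintegral_ofReal]
  · rw [← intervalIntegral.integral_of_le hc, integral_rpow (Or.inl (by linarith)),
      sub_add_cancel, Real.zero_rpow hp.ne', sub_zero]
  · exact (intervalIntegrable_iff_integrableOn_Ioc_of_le hc).mp
      (intervalIntegral.intervalIntegrable_rpow' (by linarith))
  · exact ae_restrict_of_forall_mem measurableSet_Ioc fun s hs => Real.rpow_nonneg hs.1.le _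

theorem lintegral_Ioi_rpow_neg_sub_one {c p : ℝ} (hc : 0 < c) (hp : 0 < p) :
    ∫⁻ s in Ioi c, ENNReal.ofReal (s ^ (-p - 1)) = ENNReal.ofReal (c ^ (-p) / p) := by
  rw [← ofReal_integral_eq_lintegral_ofReal]
  · rw [integral_Ioi_rpow_of_lt (by linarith) hc, sub_add_cancel, neg_div_neg_eq]
  · exact integrableOn_Ioi_rpow_of_lt (by linarith) hc
  · exact ae_restrict_of_forall_mem measurableSet_Ioi fun s hs =>
      Real.rpow_nonneg (hc.trans hs).le _

theorem lintegral_Ioi_rpow_add_mul_rpow_le {c β γ : ℝ} (hc : 0 < c) (hβ : 0 < β) (hβγ : β < γ) :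
    ∫⁻ s in Ioi 0, ENNReal.ofReal ((c + s) ^ (-γ) * s ^ (β - 1)) ≤
      ENNReal.ofReal ((1 / β + 1 / (γ - β)) * c ^ (β - γ)) := by
  rw [← Ioc_union_Ioi_eq_Ioi hc.le, lintegral_union measurableSet_Ioi (Ioc_disjoint_Ioi le_rfl)]
  have hnear : ∫⁻ s in Ioc 0 c, ENNReal.ofReal ((c + s) ^ (-γ) * s ^ (β - 1)) ≤
      ENNReal.ofReal (c ^ (β - γ) / β) :=
    calc ∫⁻ s in Ioc 0 c, ENNReal.ofReal ((c + s) ^ (-γ) * s ^ (β - 1))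
        ≤ ∫⁻ s in Ioc 0 c, ENNReal.ofReal (c ^ (-γ)) * ENNReal.ofReal (s ^ (β - 1)) := by
          refine setLIntegral_mono' measurableSet_Ioc fun s hs => ?_
          rw [← ENNReal.ofReal_mul (by positivity)]
          refine ENNReal.ofReal_le_ofReal
            (mul_le_mul_of_nonneg_right ?_ (Real.rpow_nonneg hs.1.le _))
          exact Real.rpow_le_rpow_of_nonpos hc (by linarith [hs.1]) (by linarith)
      _ = ENNReal.ofReal (c ^ (β - γ) / β) := by
          rw [lintegral_const_mul' _ _ ENNReal.ofReal_ne_top, lintegral_Ioc_rpow_sub_one hc.le hβ,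
            ← ENNReal.ofReal_mul (by positivity), sub_eq_add_neg β γ, Real.rpow_add hc]
          ring_nf
  have hfar : ∫⁻ s in Ioi c, ENNReal.ofReal ((c + s) ^ (-γ) * s ^ (β - 1)) ≤
      ENNReal.ofReal (c ^ (β - γ) / (γ - β)) :=
    calc ∫⁻ s in Ioi c, ENNReal.ofReal ((c + s) ^ (-γ) * s ^ (β - 1))
        ≤ ∫⁻ s in Ioi c, ENNReal.ofReal (s ^ (-(γ - β) - 1)) := by
          refine setLIntegral_mono' measurableSet_Ioi fun s hs => ?_
          have hs0 : 0 < s := hc.trans hs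
          rw [show -(γ - β) - 1 = -γ + (β - 1) by ring, Real.rpow_add hs0]
          refine ENNReal.ofReal_le_ofReal
            (mul_le_mul_of_nonneg_right ?_ (Real.rpow_nonneg hs0.le _))
          exact Real.rpow_le_rpow_of_nonpos hs0 (by linarith) (by linarith)
      _ = ENNReal.ofReal (c ^ (β - γ) / (γ - β)) := by
          rw [lintegral_Ioi_rpow_neg_sub_one hc (by linarith), neg_sub]
  calc _ ≤ ENNReal.ofReal (c ^ (β - γ) / β) + ENNReal.ofReal (c ^ (β - γ) / (γ - β)) :=
        add_le_add hnear hfar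
    _ = ENNReal.ofReal ((1 / β + 1 / (γ - β)) * c ^ (β - γ)) := by
        have : 0 < γ - β := by linarith
        rw [← ENNReal.ofReal_add (by positivity) (by positivity)]
        ring_nf

theorem norm_integral_Ioi_mul_rpow_le {g : ℝ → ℝ} {D c β γ : ℝ} (hD : 0 ≤ D) (hc : 0 < c)
    (hβ : 0 < β) (hβγ : β < γ) (hg : ∀ s > 0, |g s| ≤ D * (c + s) ^ (-γ)) :
    ‖∫ s in Ioi 0, g s * s ^ (β - 1)‖ ≤ D * (1 / β + 1 / (γ - β)) * c ^ (β - γ) := by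
  refine (norm_integral_le_lintegral_norm _).trans
    (ENNReal.toReal_le_of_le_ofReal (by have := sub_pos.2 hβγ; positivity) ?_)
  calc ∫⁻ s in Ioi 0, ENNReal.ofReal ‖g s * s ^ (β - 1)‖
      ≤ ∫⁻ s in Ioi 0, ENNReal.ofReal D * ENNReal.ofReal ((c + s) ^ (-γ) * s ^ (β - 1)) := by
        refine setLIntegral_mono' measurableSet_Ioi fun s (hs : 0 < s) => ?_
        rw [← ENNReal.ofReal_mul hD, Real.norm_eq_abs, abs_mul,
          abs_of_nonneg (Real.rpow_nonneg hs.le _), ← mul_assoc]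
        exact ENNReal.ofReal_le_ofReal
          (mul_le_mul_of_nonneg_right (hg s hs) (Real.rpow_nonneg hs.le _))
    _ ≤ ENNReal.ofReal D * ENNReal.ofReal ((1 / β + 1 / (γ - β)) * c ^ (β - γ)) := by
        rw [lintegral_const_mul' _ _ ENNReal.ofReal_ne_top]
        exact mul_le_mul_right (lintegral_Ioi_rpow_add_mul_rpow_le hc hβ hβγ) _
    _ = ENNReal.ofReal (D * (1 / β + 1 / (γ - β)) * c ^ (β - γ)) := by
        rw [← ENNReal.ofReal_mul hD, mul_assoc]

theorem exists_abs_iteratedDeriv_poissonKernelHalfSpace_le (n m : ℕ) :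
    ∃ D, 0 ≤ D ∧ ∀ z : EuclideanSpace ℝ (Fin n), z ≠ 0 → ∀ r ≥ 0,
      |iteratedDeriv m (fun r => poissonKernelHalfSpace n r z) r| ≤
        D * (r + ‖z‖) ^ (-((n : ℝ) + m)) := by
  set κ : ℝ := ((n : ℝ) + 1) / 2
  set c₀ : ℝ := Real.Gamma κ / Real.pi ^ κ
  have hP : c₀ • (fun a => monomial κ a 1 0) ∈ monomialSpan κ 0 :=
    Submodule.smul_mem _ c₀ (Submodule.subset_span ⟨1, 0, rfl, rfl⟩)
  obtain ⟨G, hG, hPG⟩ := exists_iteratedDeriv_eq_of_mem_monomialSpan hP m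
  obtain ⟨D, hD, hGD⟩ := exists_abs_le_of_mem_monomialSpan (by positivity) hG
  refine ⟨D, hD, fun z hz r hr => ?_⟩
  have hkernel :
      (fun r => poissonKernelHalfSpace n r z) = (c₀ • fun a => monomial κ a 1 0) ‖z‖ := by
    funext r
    simp [poissonKernelHalfSpace, monomial, c₀, κ]
  rw [hkernel, hPG ‖z‖ (norm_ne_zero_iff.mpr hz)]
  convert hGD ‖z‖ (norm_pos_iff.mpr hz) r hr using 3
  push_cast
  ring

theorem exists_norm_fracKernel_le (n : ℕ) {α : ℝ} (hα : 0 < α) :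
    ∃ A > 0, ∀ z : EuclideanSpace ℝ (Fin n), z ≠ 0 → ∀ t > 0,
      ‖fracKernel n α t z‖ ≤ A * (t + ‖z‖) ^ (-((n : ℝ) + α)) := by
  set m := mOf α
  set β : ℝ := m - α
  have hβ : 0 < β := by
    have := Nat.lt_floor_add_one α
    simp only [β, m, mOf]
    push_cast
    linarith
  have hβnm : β < n + m := by
    have : (0 : ℝ) ≤ n := n.cast_nonneg
    linarith
  obtain ⟨D, hD, hDz⟩ := exists_abs_iteratedDeriv_poissonKernelHalfSpace_le n m
  set K := 1 / β + 1 / ((n + m : ℝ) - β)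
  have hK : 0 ≤ K := by have := sub_pos.2 hβnm; positivity
  have hΓ : 0 < Real.Gamma β := Real.Gamma_pos_of_pos hβ
  refine ⟨D * K / Real.Gamma β + 1, by positivity, fun z hz t ht => ?_⟩
  have hc : 0 < t + ‖z‖ := by positivity
  have hint := norm_integral_Ioi_mul_rpow_le hD hc hβ hβnm
    (g := fun s => iteratedDeriv m (fun r => poissonKernelHalfSpace n r z) (t + s))
    fun s hs => by simpa only [add_right_comm t s] using hDz z hz (t + s) (by positivity)
  have hnorm : ‖fracKernel n α t z‖ = ‖∫ s in Ioi 0,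
      iteratedDeriv m (fun r => poissonKernelHalfSpace n r z) (t + s) * s ^ (β - 1)‖ /
        Real.Gamma β := by
    rw [fracKernel, norm_mul, norm_div, Complex.norm_exp_ofReal_mul_I, Complex.norm_real,
      Complex.norm_real, Real.norm_of_nonneg hΓ.le]
    ring
  rw [show β - (n + m : ℝ) = -((n : ℝ) + α) by ring] at hint
  rw [hnorm]
  calc _ ≤ D * K * (t + ‖z‖) ^ (-((n : ℝ) + α)) / Real.Gamma β :=
        div_le_div_of_nonneg_right hint hΓ.le
    _ = D * K / Real.Gamma β * (t + ‖z‖) ^ (-((n : ℝ) + α)) := div_mul_eq_mul_div _ _ _ |>.symm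
    _ ≤ (D * K / Real.Gamma β + 1) * (t + ‖z‖) ^ (-((n : ℝ) + α)) := by
        gcongr
        linarith

theorem lintegral_Ioi_rpow_mul_div_le {φ : ℝ → ℝ} {A a α ν q : ℝ} (hA : 0 ≤ A) (ha : 0 < a)
    (hα : 0 < α) (hν : 0 < ν) (hq : 0 < q)
    (hφ : ∀ t > 0, 0 ≤ φ t ∧ φ t ≤ A * (t + a) ^ (-(ν + α))) :
    ∫⁻ t in Ioi 0, ENNReal.ofReal ((t ^ α * φ t) ^ q / t) ≤
      ENNReal.ofReal (A ^ q * (1 / (α * q) + 1 / (ν * q)) * a ^ (-(ν * q))) := by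
  have hpt : ∀ t > 0, (t ^ α * φ t) ^ q / t ≤
      A ^ q * (t + a) ^ (-(ν + α) * q) * t ^ (α * q - 1) := by
    intro t ht
    obtain ⟨hφ0, hφA⟩ := hφ t ht
    calc (t ^ α * φ t) ^ q / t ≤ (t ^ α * (A * (t + a) ^ (-(ν + α)))) ^ q / t := by gcongr
      _ = A ^ q * (t + a) ^ (-(ν + α) * q) * t ^ (α * q - 1) := by
        rw [Real.mul_rpow (by positivity) (by positivity), Real.mul_rpow hA (by positivity),
          ← Real.rpow_mul ht.le, ← Real.rpow_mul (by positivity), Real.rpow_sub_one ht.ne']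
        ring
  rw [← Ioc_union_Ioi_eq_Ioi ha.le, lintegral_union measurableSet_Ioi (Ioc_disjoint_Ioi le_rfl)]
  have hnear : ∫⁻ t in Ioc 0 a, ENNReal.ofReal ((t ^ α * φ t) ^ q / t) ≤
      ENNReal.ofReal (A ^ q / (α * q) * a ^ (-(ν * q))) :=
    calc ∫⁻ t in Ioc 0 a, ENNReal.ofReal ((t ^ α * φ t) ^ q / t)
        ≤ ∫⁻ t in Ioc 0 a, ENNReal.ofReal (A ^ q * a ^ (-(ν + α) * q)) *
            ENNReal.ofReal (t ^ (α * q - 1)) := by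
          refine setLIntegral_mono' measurableSet_Ioc fun t ht => ?_
          rw [← ENNReal.ofReal_mul (by positivity)]
          refine ENNReal.ofReal_le_ofReal ((hpt t ht.1).trans ?_)
          gcongr A ^ q * ?_ * _
          · exact Real.rpow_nonneg ht.1.le _
          · exact Real.rpow_le_rpow_of_nonpos ha (by linarith [ht.1]) (by nlinarith)
      _ = ENNReal.ofReal (A ^ q / (α * q) * a ^ (-(ν * q))) := by
          rw [lintegral_const_mul' _ _ ENNReal.ofReal_ne_top,
            lintegral_Ioc_rpow_sub_one ha.le (by positivity), ← ENNReal.ofReal_mul (by positivity),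
            show -(ν * q) = -(ν + α) * q + α * q by ring, Real.rpow_add ha]
          ring_nf
  have hfar : ∫⁻ t in Ioi a, ENNReal.ofReal ((t ^ α * φ t) ^ q / t) ≤
      ENNReal.ofReal (A ^ q / (ν * q) * a ^ (-(ν * q))) :=
    calc ∫⁻ t in Ioi a, ENNReal.ofReal ((t ^ α * φ t) ^ q / t)
        ≤ ∫⁻ t in Ioi a, ENNReal.ofReal (A ^ q) * ENNReal.ofReal (t ^ (-(ν * q) - 1)) := by
          refine setLIntegral_mono' measurableSet_Ioi fun t (ht : a < t) => ?_
          have ht0 : 0 < t := ha.trans ht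
          rw [← ENNReal.ofReal_mul (by positivity)]
          refine ENNReal.ofReal_le_ofReal ((hpt t ht0).trans ?_)
          rw [show -(ν * q) - 1 = -(ν + α) * q + (α * q - 1) by ring, Real.rpow_add ht0,
            ← mul_assoc]
          gcongr A ^ q * ?_ * _
          exact Real.rpow_le_rpow_of_nonpos ht0 (by linarith) (by nlinarith)
      _ = ENNReal.ofReal (A ^ q / (ν * q) * a ^ (-(ν * q))) := by
          rw [lintegral_const_mul' _ _ ENNReal.ofReal_ne_top,
            lintegral_Ioi_rpow_neg_sub_one ha (by positivity), ← ENNReal.ofReal_mul (by positivity)]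
          ring_nf
  calc _ ≤ ENNReal.ofReal (A ^ q / (α * q) * a ^ (-(ν * q))) +
        ENNReal.ofReal (A ^ q / (ν * q) * a ^ (-(ν * q))) := add_le_add hnear hfar
    _ = ENNReal.ofReal (A ^ q * (1 / (α * q) + 1 / (ν * q)) * a ^ (-(ν * q))) := by
        rw [← ENNReal.ofReal_add (by positivity) (by positivity)]
        ring_nf

end PoissonKernel

theorem stmt_6_general (n : ℕ) (q : ℝ) (hq : 1 < q) (α : ℝ) (hα : 0 < α) :
    ∃ C : ℝ, 0 < C ∧ ∀ z : EuclideanSpace ℝ (Fin n), z ≠ 0 →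
      (∫⁻ t in Ioi (0 : ℝ),
          ENNReal.ofReal ((t ^ α * ‖fracKernel n α t z‖) ^ q / t)) ^ (1 / q) ≤
        ENNReal.ofReal (C / ‖z‖ ^ n) := by
  have hq0 : 0 < q := one_pos.trans hq
  obtain ⟨A, hA, hAz⟩ := PoissonKernel.exists_norm_fracKernel_le n hα
  set M := A ^ q * (1 / (α * q) + 1 / (n * q))
  have hM : 0 < M := by positivity
  refine ⟨M ^ (1 / q), by positivity, fun z hz => ?_⟩
  have hn : (0 : ℝ) < n := Nat.cast_pos.2 <| Nat.pos_of_ne_zero <| by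
    rintro rfl
    exact hz (Subsingleton.elim _ _)
  have ha : 0 < ‖z‖ := norm_pos_iff.2 hz
  calc _ ≤ ENNReal.ofReal (M * ‖z‖ ^ (-(n * q))) ^ (1 / q) :=
        ENNReal.rpow_le_rpow (PoissonKernel.lintegral_Ioi_rpow_mul_div_le hA.le ha hα hn hq0
          fun t ht => ⟨norm_nonneg _, hAz z hz t ht⟩) (by positivity)
    _ = ENNReal.ofReal (M ^ (1 / q) / ‖z‖ ^ n) := by
        rw [ENNReal.ofReal_rpow_of_nonneg (by positivity) (by positivity),
          Real.mul_rpow hM.le (by positivity), ← Real.rpow_mul ha.le,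
          show -(n * q) * (1 / q) = -(n : ℝ) by field_simp, Real.rpow_neg ha.le, Real.rpow_natCast,
          ← div_eq_mul_inv]

/-- For `1 < q < ∞` and `α > 0` there is `C = C(n,q,α) > 0` such that for
every `z ≠ 0`, `(∫₀^∞ |t^α ∂_t^α p_t(z)|^q dt/t)^{1/q} ≤ C |z|^{−n}`. -/
theorem stmt_6 (n : ℕ) (hn : 1 ≤ n) (q : ℝ) (hq : 1 < q) (α : ℝ) (hα : 0 < α) :
    ∃ C : ℝ, 0 < C ∧ ∀ z : EuclideanSpace ℝ (Fin n), z ≠ 0 →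
      (∫⁻ t in Ioi (0 : ℝ),
          ENNReal.ofReal ((t ^ α * ‖fracKernel n α t z‖) ^ q / t)) ^ (1 / q) ≤
        ENNReal.ofReal (C / ‖z‖ ^ n) :=
  stmt_6_general n q hq α hα
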